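/- arXiv:2110.13880 — 3 statements merged into one kernel-verified Lean document; each statement's English description precedes it below -/
import Mathlib

section
/- Let H be a real normed vector space, C ⊆ H a convex set, Θ a type, f : C → Θ → ℝ, θ* : C → Θ, and real constants μ, l with μ ≥ l. Assume: (1) for every θ ∈ Θ, the map α ↦ f(α, θ) is μ-strongly convex on C, i.e. for all α₁, α₂ ∈ C and β ∈ [0,1], f(β • α₁ + (1−β) • α₂, θ) ≤ β * f(α₁, θ) + (1−β) * f(α₂, θ) − (μ/2) * β * (1−β) * ‖α₁ − α₂‖²; (2) bounded regret: for all α, α' ∈ C, f(α, θ*(α')) − f(α, θ*(α)) ≤ (l/2) * ‖α − α'‖². Then g(α) := f(α, θ*(α)) is convex on C, i.e. for all α₁, α₂ ∈ C and β ∈ [0,1], g(β • α₁ + (1−β) • α₂) ≤ β * g(α₁) + (1−β) * g(α₂). -/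
/-- **Theorem 2 (paper): convexity of the attention-based objective.**
If `f α θ` is `μ`-strongly convex in `α` on a convex set `C` for every fixed `θ`,
the optimal-parameter map `θs` has bounded regret with constant `l`, and `μ ≥ l`,
then `g α = f α (θs α)` is convex on `C`. -/
theorem convex_of_strongly_convex_of_bounded_regret
    {H : Type*} [NormedAddCommGroup H] [NormedSpace ℝ H]
    (C : Set H) (hC : Convex ℝ C)
    (Θ : Type*) (f : H → Θ → ℝ) (θs : H → Θ)
    (μ l : ℝ) (hμl : l ≤ μ)
    (hsc : ∀ θ : Θ, ∀ α₁ ∈ C, ∀ α₂ ∈ C, ∀ β ∈ Set.Icc (0:ℝ) 1,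
      f (β • α₁ + (1 - β) • α₂) θ ≤
        β * f α₁ θ + (1 - β) * f α₂ θ - (μ / 2) * β * (1 - β) * ‖α₁ - α₂‖ ^ 2)
    (hreg : ∀ α ∈ C, ∀ α' ∈ C,
      f α (θs α') - f α (θs α) ≤ (l / 2) * ‖α - α'‖ ^ 2) :
    ∀ α₁ ∈ C, ∀ α₂ ∈ C, ∀ β ∈ Set.Icc (0:ℝ) 1,
      f (β • α₁ + (1 - β) • α₂) (θs (β • α₁ + (1 - β) • α₂)) ≤
        β * f α₁ (θs α₁) + (1 - β) * f α₂ (θs α₂) := by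
  intro α₁ h₁ α₂ h₂ β hβ
  obtain ⟨hβ0, hβ1⟩ := hβ
  set α := β • α₁ + (1 - β) • α₂ with hα
  have hαC : α ∈ C := hC h₁ h₂ hβ0 (by linarith) (by ring)
  have h1 : f α (θs α) ≤ β * f α₁ (θs α) + (1 - β) * f α₂ (θs α)
      - (μ / 2) * β * (1 - β) * ‖α₁ - α₂‖ ^ 2 :=
    hsc (θs α) α₁ h₁ α₂ h₂ β ⟨hβ0, hβ1⟩
  have hr1 : f α₁ (θs α) - f α₁ (θs α₁) ≤ (l / 2) * ‖α₁ - α‖ ^ 2 :=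
    hreg α₁ h₁ α hαC
  have hr2 : f α₂ (θs α) - f α₂ (θs α₂) ≤ (l / 2) * ‖α₂ - α‖ ^ 2 :=
    hreg α₂ h₂ α hαC
  have e1 : α₁ - α = (1 - β) • (α₁ - α₂) := by
    rw [hα]; module
  have e2 : α₂ - α = β • (α₂ - α₁) := by
    rw [hα]; module
  have n1 : ‖α₁ - α‖ ^ 2 = (1 - β) ^ 2 * ‖α₁ - α₂‖ ^ 2 := by
    rw [e1, norm_smul, Real.norm_eq_abs, mul_pow, sq_abs]
  have n2 : ‖α₂ - α‖ ^ 2 = β ^ 2 * ‖α₁ - α₂‖ ^ 2 := by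
    rw [e2, norm_smul, Real.norm_eq_abs, mul_pow, sq_abs, ← norm_neg,
      neg_sub]
  rw [n1] at hr1
  rw [n2] at hr2
  have hnn : 0 ≤ ‖α₁ - α₂‖ ^ 2 := sq_nonneg _
  nlinarith [mul_le_mul_of_nonneg_left hr1 hβ0,
    mul_le_mul_of_nonneg_left hr2 (by linarith : (0:ℝ) ≤ 1 - β),
    mul_nonneg (mul_nonneg hβ0 (by linarith : (0:ℝ) ≤ 1 - β)) hnn]
end

section
/- Let H be a real normed vector space, C ⊆ H a convex set, Θ a type, f : C → Θ → ℝ, θ* : C → Θ, and real constants μ, l. Assume: (1) for every θ ∈ Θ, the map α ↦ f(α, θ) is μ-strongly convex on C, i.e. for all α₁, α₂ ∈ C and β ∈ [0,1], f(β • α₁ + (1−β) • α₂, θ) ≤ β * f(α₁, θ) + (1−β) * f(α₂, θ) − (μ/2) * β * (1−β) * ‖α₁ − α₂‖²; (2) bounded regret: for all α, α' ∈ C, f(α, θ*(α')) − f(α, θ*(α)) ≤ (l/2) * ‖α − α'‖². Then g(α) := f(α, θ*(α)) satisfies, for all α₁, α₂ ∈ C and β ∈ [0,1], g(β • α₁ +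 (1−β) • α₂) ≤ β * g(α₁) + (1−β) * g(α₂) + ((l − μ)/2) * β * (1−β) * ‖α₁ − α₂‖²; in particular, when μ ≥ l, g is (μ − l)-strongly convex on C. -/
/-- **Quantitative form of Theorem 2 (paper).**
Combining `μ`-strong convexity of `f · θ` on `C` with the bounded-regret condition with
constant `l` for the optimal-parameter map `θs` yields a quantitative convexity estimate for
`g α = f α (θs α)`; in particular, when `μ ≥ l`, `g` is `(μ - l)`-strongly convex on `C`. -/
theorem quantitative_convexity_of_strongly_convex_of_bounded_regret
    {H : Type*} [NormedAddCommGroup H] [NormedSpace ℝ H]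
    (C : Set H) (hC : Convex ℝ C)
    (Θ : Type*) (f : H → Θ → ℝ) (θs : H → Θ)
    (μ l : ℝ)
    (hsc : ∀ θ : Θ, ∀ α₁ ∈ C, ∀ α₂ ∈ C, ∀ β ∈ Set.Icc (0:ℝ) 1,
      f (β • α₁ + (1 - β) • α₂) θ ≤
        β * f α₁ θ + (1 - β) * f α₂ θ - (μ / 2) * β * (1 - β) * ‖α₁ - α₂‖ ^ 2)
    (hreg : ∀ α ∈ C, ∀ α' ∈ C,
      f α (θs α') - f α (θs α) ≤ (l / 2) * ‖α - α'‖ ^ 2) :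
    (∀ α₁ ∈ C, ∀ α₂ ∈ C, ∀ β ∈ Set.Icc (0:ℝ) 1,
      f (β • α₁ + (1 - β) • α₂) (θs (β • α₁ + (1 - β) • α₂)) ≤
        β * f α₁ (θs α₁) + (1 - β) * f α₂ (θs α₂)
          + ((l - μ) / 2) * β * (1 - β) * ‖α₁ - α₂‖ ^ 2) ∧
    (l ≤ μ → ∀ α₁ ∈ C, ∀ α₂ ∈ C, ∀ β ∈ Set.Icc (0:ℝ) 1,
      f (β • α₁ + (1 - β) • α₂) (θs (β • α₁ + (1 - β) • α₂)) ≤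
        β * f α₁ (θs α₁) + (1 - β) * f α₂ (θs α₂)
          - ((μ - l) / 2) * β * (1 - β) * ‖α₁ - α₂‖ ^ 2) := by
  have main : ∀ α₁ ∈ C, ∀ α₂ ∈ C, ∀ β ∈ Set.Icc (0:ℝ) 1,
      f (β • α₁ + (1 - β) • α₂) (θs (β • α₁ + (1 - β) • α₂)) ≤
        β * f α₁ (θs α₁) + (1 - β) * f α₂ (θs α₂)
          + ((l - μ) / 2) * β * (1 - β) * ‖α₁ - α₂‖ ^ 2 := by
    intro α₁ h₁ α₂ h₂ β hβ
    obtain ⟨hβ0, hβ1⟩ := hβ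
    set αβ := β • α₁ + (1 - β) • α₂ with hαβ
    have hmem : αβ ∈ C := hC h₁ h₂ hβ0 (by linarith) (by ring)
    have hsc' := hsc (θs αβ) α₁ h₁ α₂ h₂ β ⟨hβ0, hβ1⟩
    have hr1 := hreg α₁ h₁ αβ hmem
    have hr2 := hreg α₂ h₂ αβ hmem
    have e1 : α₁ - αβ = (1 - β) • (α₁ - α₂) := by
      rw [hαβ]; module
    have e2 : α₂ - αβ = (-β) • (α₁ - α₂) := by
      rw [hαβ]; module
    have n1 : ‖α₁ - αβ‖ ^ 2 = (1 - β) ^ 2 * ‖α₁ - α₂‖ ^ 2 := by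
      rw [e1, norm_smul, Real.norm_eq_abs, abs_of_nonneg (by linarith)]; ring
    have n2 : ‖α₂ - αβ‖ ^ 2 = β ^ 2 * ‖α₁ - α₂‖ ^ 2 := by
      rw [e2, norm_smul, Real.norm_eq_abs, abs_neg, abs_of_nonneg hβ0]; ring
    rw [n1] at hr1
    rw [n2] at hr2
    nlinarith [sq_nonneg ‖α₁ - α₂‖, mul_nonneg hβ0 (sub_nonneg.mpr hβ1)]
  refine ⟨main, fun _ α₁ h₁ α₂ h₂ β hβ => ?_⟩
  have := main α₁ h₁ α₂ h₂ β hβ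
  linarith [this]
end

section
/- Let V be a real vector space and let 𝒳 ⊆ V satisfy the non-colinearity condition. Let T ≥ 1 and let x₁, x₂ : Fin T → V be tuples with x₁ t ∈ 𝒳, x₂ t ∈ 𝒳, and x₁ t ≠ x₂ t for every t : Fin T. Let α₁, α₂ : (Fin T → V) → (Fin T → ℝ) have nonnegative values, let β ∈ (0,1), and define α' x t := β * α₁ x t + (1−β) * α₂ x t. If (α' x₁ t) • (x₁ t) = (α' x₂ t) • (x₂ t) for every t, then for every t one has α₁ x₁ t = 0, α₁ x₂ t = 0, α₂ x₁ t = 0, and α₂ x₂ t = 0; in particular, (α₁ x₁ t) • (x₁ t) = (α₁ x₂ t) • (x₂ t) for every t. -/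
/-- A set `𝒳` of vectors satisfies the non-colinearity condition if no two distinct
members point in the same direction: any nonnegative multiples of distinct members
coincide only trivially. -/
def NonColinear {V : Type*} [AddCommGroup V] [Module ℝ V] (𝒳 : Set V) : Prop :=
  ∀ u ∈ 𝒳, ∀ v ∈ 𝒳, u ≠ v →
    ∀ c₁ c₂ : ℝ, 0 ≤ c₁ → 0 ≤ c₂ → c₁ • u = c₂ • v → c₁ = 0 ∧ c₂ = 0

/-- **Determinism lemma from the proof of Theorem 3 (paper).**
Under the non-colinearity condition, if the mixture attention `α' = β α₁ + (1-β) α₂`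
produces the same weighted feature tuple on two inputs whose coordinates all differ,
then `α₁` and `α₂` vanish on all coordinates of both inputs; in particular,
`α₁(x) ⊙ x` agrees on the two inputs. -/
theorem mixture_attention_determinism
    {V : Type*} [AddCommGroup V] [Module ℝ V]
    (𝒳 : Set V) (hnc : NonColinear 𝒳)
    (T : ℕ) (hT : 1 ≤ T)
    (x₁ x₂ : Fin T → V)
    (hx₁ : ∀ t, x₁ t ∈ 𝒳) (hx₂ : ∀ t, x₂ t ∈ 𝒳) (hne : ∀ t, x₁ t ≠ x₂ t)
    (α₁ α₂ : (Fin T → V) → Fin T → ℝ)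
    (hα₁ : ∀ x t, 0 ≤ α₁ x t) (hα₂ : ∀ x t, 0 ≤ α₂ x t)
    (β : ℝ) (hβ : β ∈ Set.Ioo (0:ℝ) 1)
    (heq : ∀ t : Fin T,
      (β * α₁ x₁ t + (1 - β) * α₂ x₁ t) • x₁ t =
        (β * α₁ x₂ t + (1 - β) * α₂ x₂ t) • x₂ t) :
    (∀ t : Fin T, α₁ x₁ t = 0 ∧ α₁ x₂ t = 0 ∧ α₂ x₁ t = 0 ∧ α₂ x₂ t = 0) ∧
      (∀ t : Fin T, (α₁ x₁ t) • x₁ t = (α₁ x₂ t) • x₂ t) := by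
  obtain ⟨hβ0, hβ1⟩ := hβ
  have h1β : (0:ℝ) < 1 - β := by linarith
  have key : ∀ t : Fin T, α₁ x₁ t = 0 ∧ α₁ x₂ t = 0 ∧ α₂ x₁ t = 0 ∧ α₂ x₂ t = 0 := by
    intro t
    have hc₁ : 0 ≤ β * α₁ x₁ t + (1 - β) * α₂ x₁ t := add_nonneg (mul_nonneg hβ0.le (hα₁ _ _)) (mul_nonneg h1β.le (hα₂ _ _))
    have hc₂ : 0 ≤ β * α₁ x₂ t + (1 - β) * α₂ x₂ t := add_nonneg (mul_nonneg hβ0.le (hα₁ _ _)) (mul_nonneg h1β.le (hα₂ _ _))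
    obtain ⟨h1, h2⟩ := hnc _ (hx₁ t) _ (hx₂ t) (hne t) _ _ hc₁ hc₂ (heq t)
    have a1 := hα₁ x₁ t; have a2 := hα₁ x₂ t; have a3 := hα₂ x₁ t; have a4 := hα₂ x₂ t
    constructor
    · nlinarith
    constructor
    · nlinarith
    constructor
    · nlinarith
    · nlinarith
  refine ⟨key, fun t => ?_⟩
  rw [(key t).1, (key t).2.1, zero_smul, zero_smul]
end
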